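/- Let x = x(t) be a differentiable function on an open interval satisfying the implicit equation e^{a·x(t)} · μ′(x(t))^{−1/2} = t, where μ is a smooth function with μ′ > 0 satisfying μ′ = ½ μ² + d for a constant d. Then x satisfies the second-order ODE ẍ(t) = λ₁ t ẋ(t)³ + λ₂ ẋ(t)², with λ₁ = a² + d/2 and λ₂ = −2a. -/

import Mathlib

/-!
Taking logarithms, the implicit equation reads `a x - ½ log μ'(x) = log t`. Since the Riccati
equation gives `(log μ')' = μ`, differentiating once yields the first integral
`t ẋ (a - μ(x)/2) = 1`. Differentiating that once more and eliminating `μ(x)` and `μ'(x)` with the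
first integral and the Riccati equation again leaves exactly the claimed second-order ODE.
-/

open Filter Topology Real

theorem HasDerivAt.unique_of_eqOn {𝕜 F : Type*} [NontriviallyNormedField 𝕜]
    [NormedAddCommGroup F] [NormedSpace 𝕜 F] {f g : 𝕜 → F} {f' g' : F} {t : 𝕜} {I : Set 𝕜}
    (hf : HasDerivAt f f' t) (hg : HasDerivAt g g' t) (hI : IsOpen I) (ht : t ∈ I)
    (hfg : Set.EqOn f g I) : f' = g' :=
  hf.unique (hg.congr_of_eventuallyEq (hfg.eventuallyEq_of_mem (hI.mem_nhds ht)))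

theorem HasDerivAt.comp_of_riccati {μ μ' x : ℝ → ℝ} {d t v : ℝ}
    (hμ : HasDerivAt μ (μ' (x t)) (x t)) (hx : HasDerivAt x v t)
    (hode : ∀ᶠ s in 𝓝 t, μ' (x s) = 1 / 2 * μ (x s) ^ 2 + d) :
    HasDerivAt (fun s => μ' (x s)) (μ (x t) * μ' (x t) * v) t :=
  ((((hμ.comp t hx).pow 2).const_mul (1 / 2)).add_const d).congr_of_eventuallyEq hode
    |>.congr_deriv (by simp only [Function.comp]; ring)

theorem log_exp_div_sqrt (y : ℝ) {p : ℝ} (hp : 0 < p) :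
    log (exp y / √p) = y - log p / 2 := by
  rw [log_div (exp_pos y).ne' (sqrt_pos.2 hp).ne', log_exp, log_sqrt hp.le]

theorem eq_tachibana_liu_of_first_integral {a d t v w m : ℝ}
    (h₁ : t * v * (a - m / 2) = 1)
    (h₂ : (v + t * w) * (a - m / 2) = t * v * ((1 / 2 * m ^ 2 + d) * v / 2)) :
    w = (a ^ 2 + d / 2) * t * v ^ 3 + (-(2 * a)) * v ^ 2 := by
  have ht : t ≠ 0 := by rintro rfl; simp at h₁
  refine mul_left_cancel₀ ht ?_
  -- `t v · h₂`, then eliminate `m / 2 = a - 1 / (t v)` (twice, hence the quadratic cofactor of `h₁`)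
  linear_combination (t * v) * h₂ + (v * (t * v) * (a - m / 2) - t * w - 2 * a * t * v ^ 2) * h₁

theorem implicit_potential_first_integral {a d : ℝ} {I Jμ : Set ℝ} {μ μ' x x' : ℝ → ℝ}
    (hIo : IsOpen I) (hμ : ∀ s ∈ Jμ, HasDerivAt μ (μ' s) s) (hμpos : ∀ s ∈ Jμ, 0 < μ' s)
    (hμode : ∀ s ∈ Jμ, μ' s = 1 / 2 * μ s ^ 2 + d) (hx : ∀ t ∈ I, HasDerivAt x (x' t) t)
    (hrange : ∀ t ∈ I, x t ∈ Jμ)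
    (himp : ∀ t ∈ I, exp (a * x t) / √(μ' (x t)) = t) :
    ∀ t ∈ I, t * x' t * (a - μ (x t) / 2) = 1 := by
  intro t ht
  have hX := hrange t ht
  have hpos := hμpos _ hX
  have ht₀ : t ≠ 0 := himp t ht ▸ (div_pos (exp_pos _) (sqrt_pos.2 hpos)).ne'
  have hlog : Set.EqOn (fun s => a * x s - log (μ' (x s)) / 2) log I := fun s hs => by
    dsimp only
    rw [← log_exp_div_sqrt _ (hμpos _ (hrange s hs)), himp s hs]
  have hode : ∀ᶠ s in 𝓝 t, μ' (x s) = 1 / 2 * μ (x s) ^ 2 + d := by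
    filter_upwards [hIo.mem_nhds ht] with s hs using hμode _ (hrange s hs)
  have hderiv : HasDerivAt (fun s => a * x s - log (μ' (x s)) / 2)
      ((a - μ (x t) / 2) * x' t) t :=
    (((hx t ht).const_mul a).sub
      ((((hμ _ hX).comp_of_riccati (hx t ht) hode).log hpos.ne').div_const 2)).congr_deriv
      (by field_simp)
  have hrate := hderiv.unique_of_eqOn (hasDerivAt_log ht₀) hIo ht hlog
  field_simp at hrate
  linear_combination hrate / 2

theorem implicit_potential_tachibana_liu_ode_general
    (a d : ℝ) (I Jμ : Set ℝ) (hIo : IsOpen I)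
    (μ μ' : ℝ → ℝ)
    (hμ : ∀ s ∈ Jμ, HasDerivAt μ (μ' s) s)
    (hμpos : ∀ s ∈ Jμ, 0 < μ' s)
    (hμode : ∀ s ∈ Jμ, μ' s = (1 / 2) * (μ s) ^ 2 + d)
    (x x' x'' : ℝ → ℝ)
    (hx : ∀ t ∈ I, HasDerivAt x (x' t) t)
    (hx' : ∀ t ∈ I, HasDerivAt x' (x'' t) t)
    (hrange : ∀ t ∈ I, x t ∈ Jμ)
    (himp : ∀ t ∈ I, Real.exp (a * x t) / Real.sqrt (μ' (x t)) = t) :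
    ∀ t ∈ I, x'' t = (a ^ 2 + d / 2) * t * (x' t) ^ 3 + (-(2 * a)) * (x' t) ^ 2 := by
  intro t ht
  have hfirst := implicit_potential_first_integral hIo hμ hμpos hμode hx hrange himp
  have hX := hrange t ht
  have hderiv : HasDerivAt (fun s => s * x' s * (a - μ (x s) / 2))
      ((x' t + t * x'' t) * (a - μ (x t) / 2) - t * x' t * (μ' (x t) * x' t / 2)) t :=
    (((hasDerivAt_id' t).mul (hx' t ht)).mul
      ((((hμ _ hX).comp t (hx t ht)).div_const 2).const_sub a)).congr_deriv
      (by simp only [Function.comp, Pi.mul_apply]; ring)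
  have hconst := hderiv.unique_of_eqOn (hasDerivAt_const t 1) hIo ht hfirst
  rw [hμode _ hX] at hconst
  exact eq_tachibana_liu_of_first_integral (hfirst t ht) (by linear_combination hconst)

/-- if `x` satisfies the implicit equation `e^{a x(t)} (μ'(x(t)))^{-1/2} = t`
where `μ' > 0` and `μ' = ½ μ² + d`, then `x` satisfies the Tachibana–Liu type ODE
`ẍ = (a² + d/2) t ẋ³ - 2a ẋ²`. -/
theorem implicit_potential_tachibana_liu_ode
    (a d : ℝ) (I Jμ : Set ℝ) (hIo : IsOpen I) (hI : I ⊆ Set.Ioi 0)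
    (hJo : IsOpen Jμ)
    (μ μ' : ℝ → ℝ)
    (hμ : ∀ s ∈ Jμ, HasDerivAt μ (μ' s) s)
    (hμpos : ∀ s ∈ Jμ, 0 < μ' s)
    (hμode : ∀ s ∈ Jμ, μ' s = (1 / 2) * (μ s) ^ 2 + d)
    (x x' x'' : ℝ → ℝ)
    (hx : ∀ t ∈ I, HasDerivAt x (x' t) t)
    (hx' : ∀ t ∈ I, HasDerivAt x' (x'' t) t)
    (hrange : ∀ t ∈ I, x t ∈ Jμ)
    (himp : ∀ t ∈ I, Real.exp (a * x t) / Real.sqrt (μ' (x t)) = t) :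
    ∀ t ∈ I, x'' t = (a ^ 2 + d / 2) * t * (x' t) ^ 3 + (-(2 * a)) * (x' t) ^ 2 :=
  implicit_potential_tachibana_liu_ode_general a d I Jμ hIo μ μ' hμ hμpos hμode x x' x'' hx hx'
    hrange himp
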